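/- arXiv:1208.3629 — 3 statements merged into one kernel-verified Lean document; each statement's English description precedes it below -/
import Mathlib

section
/- Let G be a finite simple graph with n vertices, m edges, and maximum degree at most Δ, where Δ ≥ 1. Then (m/(2Δ − 1))·log 2 ≤ log Z(G,1) ≤ m·log 2 ≤ (nΔ/2)·log 2, where Z(G,1) is the total number of matchings of G (including the empty matching). -/
/-!
A matching is a set of edges, so there are at most `2 ^ m` of them. Conversely, all `2 ^ |M|`
subsets of a maximum matching `M` are matchings, and by maximality every edge of `G` meets an edge
of `M`; an edge meets at most `2Δ - 1` edges (itself included), so `m ≤ (2Δ - 1) |M|`.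
The last inequality is the handshake lemma `2m = Σ deg v ≤ nΔ`.
-/

open scoped Classical

noncomputable section

/-- `M` is a matching of `G`: a set of edges of `G`, no two of which share an endpoint. -/
def IsMatchingF {V : Type*} (G : SimpleGraph V) (M : Finset (Sym2 V)) : Prop :=
  (∀ e ∈ M, e ∈ G.edgeSet) ∧
  ∀ e ∈ M, ∀ f ∈ M, e ≠ f → ∀ v : V, v ∈ e → v ∉ f

/-- The monomer-dimer partition function `Z(G,λ) = Σ_{M matching of G} λ^{|M|}`. -/
def Zmd {V : Type*} [Fintype V] (G : SimpleGraph V) (lam : ℝ) : ℝ :=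
  ∑ M : Finset (Sym2 V), if IsMatchingF G M then lam ^ M.card else 0

section

open Finset

variable {V : Type*} {G : SimpleGraph V}

theorem isMatchingF_empty : IsMatchingF G ∅ := by
  simp [IsMatchingF]

theorem IsMatchingF.mono {M N : Finset (Sym2 V)} (hM : IsMatchingF G M) (hNM : N ⊆ M) :
    IsMatchingF G N :=
  ⟨fun e he => hM.1 e (hNM he), fun e he f hf => hM.2 e (hNM he) f (hNM hf)⟩

theorem IsMatchingF.insert {M : Finset (Sym2 V)} {e : Sym2 V} (hM : IsMatchingF G M)
    (he : e ∈ G.edgeSet) (hdisj : ∀ f ∈ M, ∀ v ∈ e, v ∉ f) : IsMatchingF G (insert e M) := by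
  refine ⟨fun f hf => ?_, fun e₁ h₁ e₂ h₂ hne v hv₁ => ?_⟩
  · rcases mem_insert.mp hf with rfl | hf
    exacts [he, hM.1 f hf]
  rcases mem_insert.mp h₁ with rfl | h₁M <;> rcases mem_insert.mp h₂ with rfl | h₂M
  · exact absurd rfl hne
  · exact hdisj e₂ h₂M v hv₁
  · exact fun hv₂ => hdisj e₁ h₁M v hv₂ hv₁
  · exact hM.2 e₁ h₁M e₂ h₂M hne v hv₁

theorem IsMatchingF.subset_edgeFinset [Fintype V] {M : Finset (Sym2 V)} (hM : IsMatchingF G M) :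
    M ⊆ G.edgeFinset :=
  fun e he => SimpleGraph.mem_edgeFinset.mpr (hM.1 e he)

theorem Sym2.notMem_of_forall_notMem {M : Finset (Sym2 V)} {e : Sym2 V}
    (hdisj : ∀ f ∈ M, ∀ v ∈ e, v ∉ f) : e ∉ M := by
  intro heM
  induction e using Sym2.ind with
  | _ a b => exact hdisj _ heM a (Sym2.mem_mk_left a b) (Sym2.mem_mk_left a b)

namespace SimpleGraph

variable [Fintype V]

def edgesMeeting (G : SimpleGraph V) (f : Sym2 V) : Finset (Sym2 V) :=
  G.edgeFinset.filter fun e => ∃ v ∈ e, v ∈ f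

theorem card_edgesMeeting_le {Δ : ℕ} (hdeg : ∀ v, G.degree v ≤ Δ) {f : Sym2 V}
    (hf : f ∈ G.edgeSet) : #(G.edgesMeeting f) ≤ 2 * Δ - 1 := by
  induction f using Sym2.ind with
  | _ a b =>
    have hsub : G.edgesMeeting s(a, b) ⊆ G.incidenceFinset a ∪ G.incidenceFinset b := by
      intro e he
      obtain ⟨heG, v, hve, hvf⟩ := mem_filter.mp he
      replace heG : e ∈ G.edgeSet := mem_edgeFinset.mp heG
      rcases Sym2.mem_iff.mp hvf with rfl | rfl
      · exact mem_union_left _ ((G.mem_incidenceFinset _ _).mpr ⟨heG, hve⟩)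
      · exact mem_union_right _ ((G.mem_incidenceFinset _ _).mpr ⟨heG, hve⟩)
    -- `s(a, b)` is incident to both endpoints, so it is counted twice in `deg a + deg b`.
    have hshared : 1 ≤ #(G.incidenceFinset a ∩ G.incidenceFinset b) :=
      card_pos.mpr ⟨s(a, b), mem_inter.mpr
        ⟨(G.mem_incidenceFinset _ _).mpr ⟨hf, Sym2.mem_mk_left a b⟩,
         (G.mem_incidenceFinset _ _).mpr ⟨hf, Sym2.mem_mk_right a b⟩⟩⟩
    have hunion := card_union_add_card_inter (G.incidenceFinset a) (G.incidenceFinset b)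
    rw [card_incidenceFinset_eq_degree, card_incidenceFinset_eq_degree] at hunion
    have := card_le_card hsub
    have := hdeg a
    have := hdeg b
    omega

def matchingsF (G : SimpleGraph V) : Finset (Finset (Sym2 V)) :=
  univ.filter (IsMatchingF G)

theorem mem_matchingsF {M : Finset (Sym2 V)} : M ∈ G.matchingsF ↔ IsMatchingF G M := by
  simp [matchingsF]

theorem Zmd_one_eq_card_matchingsF : Zmd G 1 = #G.matchingsF := by
  rw [matchingsF, card_filter]
  push_cast
  simp [Zmd]

theorem card_matchingsF_pos : 0 < #G.matchingsF :=
  card_pos.mpr ⟨∅, mem_matchingsF.mpr isMatchingF_empty⟩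

theorem card_matchingsF_le_two_pow : #G.matchingsF ≤ 2 ^ #G.edgeFinset := by
  rw [← card_powerset]
  exact card_le_card fun M hM =>
    mem_powerset.mpr (mem_matchingsF.mp hM).subset_edgeFinset

theorem two_pow_card_le_card_matchingsF {M : Finset (Sym2 V)} (hM : IsMatchingF G M) :
    2 ^ #M ≤ #G.matchingsF := by
  rw [← card_powerset]
  exact card_le_card fun N hN => mem_matchingsF.mpr (hM.mono (mem_powerset.mp hN))

theorem exists_meets_of_forall_card_le {M : Finset (Sym2 V)} (hM : IsMatchingF G M)
    (hmax : ∀ N ∈ G.matchingsF, #N ≤ #M) {e : Sym2 V} (he : e ∈ G.edgeSet) :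
    ∃ f ∈ M, ∃ v ∈ e, v ∈ f := by
  by_contra! hdisj
  have := hmax _ (mem_matchingsF.mpr (hM.insert he hdisj))
  rw [card_insert_of_notMem (Sym2.notMem_of_forall_notMem hdisj)] at this
  omega

theorem card_edgeFinset_le_card_mul_of_forall_card_le {Δ : ℕ} (hdeg : ∀ v, G.degree v ≤ Δ)
    {M : Finset (Sym2 V)} (hM : IsMatchingF G M) (hmax : ∀ N ∈ G.matchingsF, #N ≤ #M) :
    #G.edgeFinset ≤ #M * (2 * Δ - 1) := by
  have hcover : G.edgeFinset ⊆ M.biUnion G.edgesMeeting := by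
    intro e he
    obtain ⟨f, hf, v, hve, hvf⟩ := exists_meets_of_forall_card_le hM hmax (mem_edgeFinset.mp he)
    exact mem_biUnion.mpr ⟨f, hf, mem_filter.mpr ⟨he, v, hve, hvf⟩⟩
  exact (card_le_card hcover).trans
    (card_biUnion_le_card_mul _ _ _ fun f hf => card_edgesMeeting_le hdeg (hM.1 f hf))

theorem exists_card_edgeFinset_le_card_mul {Δ : ℕ} (hdeg : ∀ v, G.degree v ≤ Δ) :
    ∃ M, IsMatchingF G M ∧ #G.edgeFinset ≤ #M * (2 * Δ - 1) := by
  obtain ⟨M, hM, hmax⟩ := exists_max_image G.matchingsF card (card_pos.mp card_matchingsF_pos)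
  exact ⟨M, mem_matchingsF.mp hM,
    card_edgeFinset_le_card_mul_of_forall_card_le hdeg (mem_matchingsF.mp hM) hmax⟩

theorem two_mul_card_edgeFinset_le {Δ : ℕ} (hdeg : ∀ v, G.degree v ≤ Δ) :
    2 * #G.edgeFinset ≤ Fintype.card V * Δ := by
  rw [← sum_degrees_eq_twice_card_edges, ← smul_eq_mul, ← card_univ]
  exact sum_le_card_nsmul _ _ _ fun v _ => hdeg v

end SimpleGraph

end

theorem stmt9 {V : Type*} [Fintype V] (G : SimpleGraph V) (Δ : ℕ) (hΔ : 1 ≤ Δ)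
    (hdeg : ∀ v : V, G.degree v ≤ Δ) :
    ((G.edgeFinset.card : ℝ) / (2 * Δ - 1)) * Real.log 2 ≤ Real.log (Zmd G 1) ∧
    Real.log (Zmd G 1) ≤ (G.edgeFinset.card : ℝ) * Real.log 2 ∧
    (G.edgeFinset.card : ℝ) * Real.log 2 ≤ ((Fintype.card V : ℝ) * Δ / 2) * Real.log 2 := by
  have hZpos : (0 : ℝ) < G.matchingsF.card := by exact_mod_cast SimpleGraph.card_matchingsF_pos
  rw [SimpleGraph.Zmd_one_eq_card_matchingsF]
  obtain ⟨M, hM, hcount⟩ := SimpleGraph.exists_card_edgeFinset_le_card_mul hdeg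
  refine ⟨?_, ?_, ?_⟩
  · have hcountR : (G.edgeFinset.card : ℝ) ≤ M.card * (2 * Δ - 1) := by
      have := (Nat.cast_le (α := ℝ)).mpr hcount
      push_cast [Nat.cast_sub (by omega : 1 ≤ 2 * Δ)] at this
      exact this
    have hΔR : (1 : ℝ) ≤ Δ := by exact_mod_cast hΔ
    calc (G.edgeFinset.card : ℝ) / (2 * Δ - 1) * Real.log 2
        ≤ M.card * Real.log 2 := by
          gcongr
          exact (div_le_iff₀ (by linarith)).mpr hcountR
      _ = Real.log ((2 : ℝ) ^ M.card) := by rw [Real.log_pow]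
      _ ≤ Real.log G.matchingsF.card := Real.log_le_log (by positivity)
          (by exact_mod_cast SimpleGraph.two_pow_card_le_card_matchingsF hM)
  · rw [← Real.log_pow]
    exact Real.log_le_log hZpos (by exact_mod_cast SimpleGraph.card_matchingsF_le_two_pow)
  · gcongr
    have : (2 * G.edgeFinset.card : ℝ) ≤ Fintype.card V * Δ := by
      exact_mod_cast SimpleGraph.two_mul_card_edgeFinset_le hdeg
    linarith
end
end

section
/- Fix λ > 0 and an integer Δ ≥ 1, let (y_k)_{k≥1} be given by y_1 = 1 and y_{k+1} = 1/(1 + λΔ·y_k), and let α = (1 + √(1 + 4λΔ))/2 and β = (1 − √(1 + 4λΔ))/2. Set C_Δ = (α² + β² − 2αβ)/α³ and D_Δ = |β|/α. Then |y_k − y_{k−1}| is asymptotically equivalent to C_Δ·(D_Δ)^{k−1} as k → ∞, i.e., lim_{k→∞} |y_k − y_{k−1}| / (D_Δ)^{k−1} = C_Δ. -/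
/-!
With `μ = λΔ`, the numbers `α` and `β` are the roots of `x² = x + μ`, so `u n = αⁿ - βⁿ` satisfies
`u (n + 2) = u (n + 1) + μ u n` and the recursion is solved by `y n = u n / u (n + 1)`.
Cassini's identity `u (n + 1)² - u n u (n + 2) = (αβ)ⁿ (α - β)²` turns `y (n + 2) - y (n + 1)` into
`(αβ)ⁿ⁺¹ (α - β)² / (u (n + 2) u (n + 3))`; since `|αβ| / D = α²` and `αⁿ / u n → 1` (as `|β| < α`),
the normalised differences tend to `(α - β)² / α³ = C`.
-/

open Filter Topology

noncomputable def powSubPowRatio (α β : ℝ) (n : ℕ) : ℝ :=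
  (α ^ n - β ^ n) / (α ^ (n + 1) - β ^ (n + 1))

section PowSubPow

variable {α β : ℝ}

lemma pow_sub_pow_pos (h : |β| < α) {n : ℕ} (hn : n ≠ 0) : 0 < α ^ n - β ^ n := by
  have hβn : β ^ n ≤ |β| ^ n := by rw [← abs_pow]; exact le_abs_self _
  linarith [pow_lt_pow_left₀ h (abs_nonneg β) hn]

lemma tendsto_pow_div_pow_sub_pow (h : |β| < α) :
    Tendsto (fun n : ℕ => α ^ n / (α ^ n - β ^ n)) atTop (𝓝 1) := by
  have hα : 0 < α := (abs_nonneg β).trans_lt h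
  have hq : |β / α| < 1 := by rwa [abs_div, abs_of_pos hα, div_lt_one hα]
  have hlim : Tendsto (fun n : ℕ => 1 / (1 - (β / α) ^ n)) atTop (𝓝 (1 / (1 - 0))) :=
    tendsto_const_nhds.div (tendsto_const_nhds.sub (tendsto_pow_atTop_nhds_zero_of_abs_lt_one hq))
      (by norm_num)
  rw [sub_zero, div_one] at hlim
  refine hlim.congr fun n => ?_
  rw [div_pow, one_sub_div (pow_ne_zero n hα.ne'), one_div_div]

lemma pow_sub_pow_sq_sub_mul (α β : ℝ) (n : ℕ) :
    (α ^ (n + 1) - β ^ (n + 1)) ^ 2 - (α ^ n - β ^ n) * (α ^ (n + 2) - β ^ (n + 2)) =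
      (α * β) ^ n * (α - β) ^ 2 := by
  ring

lemma abs_powSubPowRatio_sub_div (hβ : β ≠ 0) (h : |β| < α) (n : ℕ) :
    |powSubPowRatio α β (n + 2) - powSubPowRatio α β (n + 1)| / (|β| / α) ^ (n + 1) =
      (α - β) ^ 2 / α ^ 3 *
        (α ^ (n + 2) / (α ^ (n + 2) - β ^ (n + 2)) * (α ^ (n + 3) / (α ^ (n + 3) - β ^ (n + 3)))) := by
  have hα : 0 < α := (abs_nonneg β).trans_lt h
  have h2 := pow_sub_pow_pos h (n := n + 2) (by omega)
  have h3 := pow_sub_pow_pos h (n := n + 3) (by omega)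
  have hdiff : powSubPowRatio α β (n + 2) - powSubPowRatio α β (n + 1) =
      (α * β) ^ (n + 1) * (α - β) ^ 2 / ((α ^ (n + 2) - β ^ (n + 2)) * (α ^ (n + 3) - β ^ (n + 3))) := by
    rw [← pow_sub_pow_sq_sub_mul]
    unfold powSubPowRatio
    field_simp
  rw [hdiff, abs_div, abs_mul, abs_pow, abs_mul, abs_of_pos hα, abs_of_pos (mul_pos h2 h3),
    abs_sq]
  have hβ' : |β| ≠ 0 := abs_ne_zero.2 hβ
  rw [div_pow]
  field_simp
  ring

lemma tendsto_abs_powSubPowRatio_sub_div (hβ : β ≠ 0) (h : |β| < α) :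
    Tendsto (fun n : ℕ => |powSubPowRatio α β (n + 2) - powSubPowRatio α β (n + 1)| /
      (|β| / α) ^ (n + 1)) atTop (𝓝 ((α - β) ^ 2 / α ^ 3)) := by
  simp_rw [abs_powSubPowRatio_sub_div hβ h]
  have hu := tendsto_pow_div_pow_sub_pow h
  simpa using tendsto_const_nhds.mul
    (((tendsto_add_atTop_iff_nat 2).2 hu).mul ((tendsto_add_atTop_iff_nat 3).2 hu))

end PowSubPow

lemma eq_powSubPowRatio_of_rec {α β μ : ℝ} {y : ℕ → ℝ} (hsum : α + β = 1) (hprod : α * β = -μ)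
    (h : |β| < α) (hy1 : y 1 = 1) (hrec : ∀ k : ℕ, 1 ≤ k → y (k + 1) = 1 / (1 + μ * y k)) :
    ∀ n : ℕ, 1 ≤ n → y n = powSubPowRatio α β n := by
  have hα : α ^ 2 = α + μ := by linear_combination α * hsum - hprod
  have hβ : β ^ 2 = β + μ := by linear_combination β * hsum - hprod
  intro n hn
  induction n, hn using Nat.le_induction with
  | base =>
    have h2 := (pow_sub_pow_pos h (n := 2) two_ne_zero).ne'
    rw [hy1, powSubPowRatio]
    field_simp
    linear_combination (α - β) * hsum
  | succ n hn ih =>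
    have h1 := (pow_sub_pow_pos h (n := n + 1) (by omega)).ne'
    have hstep : 1 + μ * powSubPowRatio α β n =
        (α ^ (n + 2) - β ^ (n + 2)) / (α ^ (n + 1) - β ^ (n + 1)) := by
      rw [powSubPowRatio]
      field_simp
      linear_combination -α ^ n * hα + β ^ n * hβ
    rw [hrec n hn, ih, hstep, one_div_div, powSubPowRatio]

lemma sqrt_roots_sum_prod_bounds {μ α β : ℝ} (hμ : 0 < μ) (hα : α = (1 + √(1 + 4 * μ)) / 2)
    (hβ : β = (1 - √(1 + 4 * μ)) / 2) : α + β = 1 ∧ α * β = -μ ∧ β < 0 ∧ |β| < α := by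
  have hs : √(1 + 4 * μ) ^ 2 = 1 + 4 * μ := Real.sq_sqrt (by linarith)
  have hs1 : 1 < √(1 + 4 * μ) := by
    rw [Real.lt_sqrt zero_le_one]; linarith
  have hβneg : β < 0 := by rw [hβ]; linarith
  refine ⟨by rw [hα, hβ]; ring, by rw [hα, hβ]; linear_combination (-1 / 4) * hs, hβneg, ?_⟩
  rw [abs_of_neg hβneg, hα, hβ]
  linarith

theorem stmt13 (lam : ℝ) (hlam : 0 < lam) (Δ : ℕ) (hΔ : 1 ≤ Δ)
    (y : ℕ → ℝ) (hy1 : y 1 = 1)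
    (hrec : ∀ k : ℕ, 1 ≤ k → y (k + 1) = 1 / (1 + lam * Δ * y k))
    (α β C D : ℝ) (hα : α = (1 + Real.sqrt (1 + 4 * lam * Δ)) / 2)
    (hβ : β = (1 - Real.sqrt (1 + 4 * lam * Δ)) / 2)
    (hC : C = (α ^ 2 + β ^ 2 - 2 * α * β) / α ^ 3)
    (hD : D = |β| / α) :
    Filter.Tendsto (fun k : ℕ => |y k - y (k - 1)| / D ^ (k - 1))
      Filter.atTop (nhds C) := by
  have hμ : 0 < lam * Δ := mul_pos hlam (by exact_mod_cast hΔ)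
  rw [mul_assoc] at hα hβ
  obtain ⟨hsum, hprod, hβneg, hβα⟩ := sqrt_roots_sum_prod_bounds hμ hα hβ
  have hy := eq_powSubPowRatio_of_rec hsum hprod hβα hy1 hrec
  have hC' : C = (α - β) ^ 2 / α ^ 3 := by rw [hC]; ring
  rw [hC', hD, ← tendsto_add_atTop_iff_nat 2]
  refine (tendsto_abs_powSubPowRatio_sub_div hβneg.ne hβα).congr fun n => ?_
  rw [hy (n + 2) (by omega), show n + 2 - 1 = n + 1 from rfl, hy (n + 1) (by omega)]
end

section
/- Fix λ > 0. For an integer Δ ≥ 1 let (y_k)_{k≥1} be given by y_1 = 1 and y_{k+1} = 1/(1 + λΔ·y_k), and for ε > 0 define h̲(ε,Δ) = sup{ h ≥ 2 : |y_h − y_{h−1}| ≥ ε } (which is finite for all sufficiently small ε > 0). Then for each Δ the limit lim_{ε→0⁺} h̲(ε,Δ)/log(1/ε) exists and equals −1/log(|β|/α), where α = (1 + √(1 + 4λΔ))/2 and β = (1 − √(1 + 4λΔ))/2, and moreover lim_{Δ→∞} (1/√Δ)·lim_{ε→0⁺} h̲(ε,Δ)/log(1/ε) = √λ. -/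
noncomputable section

/-- The sequence `y_1 = 1`, `y_{k+1} = 1/(1 + λΔ·y_k)` (with junk value `y_0 = 1`). -/
def yseq (lam : ℝ) (Δ : ℕ) : ℕ → ℝ
  | 0 => 1
  | 1 => 1
  | (k + 2) => 1 / (1 + lam * Δ * yseq lam Δ (k + 1))

/-- `h̲(ε,Δ) = sup { h ≥ 2 : |y_h − y_{h−1}| ≥ ε }`. -/
def hlow (lam : ℝ) (Δ : ℕ) (ε : ℝ) : ℕ :=
  sSup {h : ℕ | 2 ≤ h ∧ ε ≤ |yseq lam Δ h - yseq lam Δ (h - 1)|}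

/-- `α = (1 + √(1 + 4λΔ))/2`. -/
def alphaMD (lam : ℝ) (Δ : ℕ) : ℝ := (1 + Real.sqrt (1 + 4 * lam * Δ)) / 2

/-- `β = (1 − √(1 + 4λΔ))/2`. -/
def betaMD (lam : ℝ) (Δ : ℕ) : ℝ := (1 - Real.sqrt (1 + 4 * lam * Δ)) / 2

/-!
Put `c = λΔ`. Then `y_{k+1} = q_k / q_{k+1}` for the continued-fraction denominators
`q_0 = q_1 = 1`, `q_{k+2} = q_{k+1} + c q_k`, and the Cassini-type identity
`q_{k+1}² - q_{k+2} q_k = (-c)^{k+1}` gives `|y_{k+2} - y_{k+1}| = c^{k+1} / (q_{k+1} q_{k+2})`.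
As `α² = α + c`, comparison with the recurrence gives `α^{k-1} ≤ q_k ≤ α^k`, so the differences are
`Θ(ρ^h)` with `ρ = c / α² = |β| / α`; hence the last index with difference `≥ ε` is
`log (1/ε) / log (1/ρ) + O(1)`. Finally `ρ = 1 - 1/α`, so `-1 / log ρ ∈ [α - 1, α]`, and
`α = √(λΔ) + O(1)`.
-/

open Filter Topology

section Recurrence

variable {c : ℝ}

/-- Denominators of the convergents of the continued fraction `1/(1 + c/(1 + c/(1 + ⋯)))`. -/
def cfDenom (c : ℝ) : ℕ → ℝ
  | 0 => 1
  | 1 => 1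
  | (k + 2) => cfDenom c (k + 1) + c * cfDenom c k

theorem cfDenom_add_two (c : ℝ) (k : ℕ) :
    cfDenom c (k + 2) = cfDenom c (k + 1) + c * cfDenom c k := rfl

theorem cfDenom_pos (hc : 0 ≤ c) (k : ℕ) : 0 < cfDenom c k := by
  induction k using Nat.twoStepInduction with
  | zero => exact one_pos
  | one => exact one_pos
  | more k _ _ => rw [cfDenom_add_two]; positivity

theorem cfDenom_sq_sub_mul (c : ℝ) (k : ℕ) :
    cfDenom c (k + 1) ^ 2 - cfDenom c (k + 2) * cfDenom c k = (-c) ^ (k + 1) := by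
  induction k with
  | zero => simp [cfDenom]
  | succ k ih =>
    have hrec : (-c) ^ (k + 1 + 1) = -c * (-c) ^ (k + 1) := by ring
    rw [hrec, ← ih, cfDenom_add_two c (k + 1), cfDenom_add_two c k]
    ring

theorem le_of_recurrence (hc : 0 ≤ c) {u v : ℕ → ℝ}
    (hu : ∀ k, u (k + 2) = u (k + 1) + c * u k) (hv : ∀ k, v (k + 2) = v (k + 1) + c * v k)
    (h₀ : u 0 ≤ v 0) (h₁ : u 1 ≤ v 1) (k : ℕ) : u k ≤ v k := by
  induction k using Nat.twoStepInduction with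
  | zero => exact h₀
  | one => exact h₁
  | more k ih₀ ih₁ =>
    rw [hu, hv]
    gcongr

variable {α : ℝ}

theorem pow_add_two_of_sq_eq (hα : α ^ 2 = α + c) (k : ℕ) :
    α ^ (k + 2) = α ^ (k + 1) + c * α ^ k := by
  rw [pow_add, hα]; ring

theorem cfDenom_le_pow (hc : 0 ≤ c) (hα : α ^ 2 = α + c) (hα₁ : 1 ≤ α) (k : ℕ) :
    cfDenom c k ≤ α ^ k :=
  le_of_recurrence hc (cfDenom_add_two c) (pow_add_two_of_sq_eq hα) (by simp [cfDenom])
    (by simpa [cfDenom] using hα₁) k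

theorem pow_le_mul_cfDenom (hc : 0 ≤ c) (hα : α ^ 2 = α + c) (hα₁ : 1 ≤ α) (k : ℕ) :
    α ^ k ≤ α * cfDenom c k :=
  le_of_recurrence (v := fun k => α * cfDenom c k) hc (pow_add_two_of_sq_eq hα)
    (fun k => by rw [cfDenom_add_two]; ring) (by simpa [cfDenom] using hα₁)
    (by simp [cfDenom]) k

end Recurrence

section Sequence

variable {lam : ℝ} {Δ : ℕ}

theorem yseq_succ_eq_div (hc : 0 ≤ lam * Δ) (k : ℕ) :
    yseq lam Δ (k + 1) = cfDenom (lam * Δ) k / cfDenom (lam * Δ) (k + 1) := by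
  induction k with
  | zero => simp [yseq, cfDenom]
  | succ k ih =>
    have := cfDenom_pos hc k
    have := cfDenom_pos hc (k + 1)
    rw [yseq, ih, cfDenom_add_two]
    field_simp

theorem abs_yseq_sub (hc : 0 ≤ lam * Δ) (k : ℕ) :
    |yseq lam Δ (k + 2) - yseq lam Δ (k + 1)| =
      (lam * Δ) ^ (k + 1) / (cfDenom (lam * Δ) (k + 1) * cfDenom (lam * Δ) (k + 2)) := by
  have := cfDenom_pos hc (k + 1)
  have := cfDenom_pos hc (k + 2)
  have hdiff : yseq lam Δ (k + 2) - yseq lam Δ (k + 1) =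
      (-(lam * Δ)) ^ (k + 1) / (cfDenom (lam * Δ) (k + 1) * cfDenom (lam * Δ) (k + 2)) := by
    rw [yseq_succ_eq_div hc (k + 1), yseq_succ_eq_div hc k, ← cfDenom_sq_sub_mul]
    field_simp
  rw [hdiff, abs_div, abs_pow, abs_neg, abs_of_nonneg hc, abs_of_pos (by positivity)]

theorem abs_yseq_sub_bounds {α : ℝ} (hα : α ^ 2 = α + lam * Δ) (hα₁ : 1 < α) {h : ℕ}
    (hh : 2 ≤ h) :
    (α - 1)⁻¹ * ((α - 1) / α) ^ h ≤ |yseq lam Δ h - yseq lam Δ (h - 1)| ∧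
      |yseq lam Δ h - yseq lam Δ (h - 1)| ≤ α ^ 2 / (α - 1) * ((α - 1) / α) ^ h := by
  obtain ⟨k, rfl⟩ := Nat.exists_eq_add_of_le' hh
  have hc : lam * Δ = α * (α - 1) := by linear_combination -hα
  have hc₀ : 0 ≤ lam * Δ := by rw [hc]; nlinarith
  have := cfDenom_pos hc₀ (k + 1)
  have := cfDenom_pos hc₀ (k + 2)
  have hα₀ : 0 < α - 1 := by linarith
  have : 0 < α := by linarith
  have hscale :
      (α - 1)⁻¹ * ((α - 1) / α) ^ (k + 2) = (lam * Δ) ^ (k + 1) / α ^ (2 * k + 3) := by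
    rw [hc, div_pow, mul_pow, eq_div_iff (by positivity)]
    field_simp
    ring
  have hupper : cfDenom (lam * Δ) (k + 1) * cfDenom (lam * Δ) (k + 2) ≤ α ^ (2 * k + 3) := by
    rw [show 2 * k + 3 = (k + 1) + (k + 2) by ring, pow_add]
    gcongr <;> exact cfDenom_le_pow hc₀ hα hα₁.le _
  have hlower :
      α ^ (2 * k + 3) ≤ α ^ 2 * (cfDenom (lam * Δ) (k + 1) * cfDenom (lam * Δ) (k + 2)) := by
    rw [show 2 * k + 3 = (k + 1) + (k + 2) by ring, pow_add,
      show α ^ 2 * (cfDenom (lam * Δ) (k + 1) * cfDenom (lam * Δ) (k + 2)) =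
        (α * cfDenom (lam * Δ) (k + 1)) * (α * cfDenom (lam * Δ) (k + 2)) by ring]
    gcongr <;> exact pow_le_mul_cfDenom hc₀ hα hα₁.le _
  rw [show k + 2 - 1 = k + 1 from rfl, abs_yseq_sub hc₀, hscale,
    show α ^ 2 / (α - 1) * ((α - 1) / α) ^ (k + 2) =
      α ^ 2 * ((lam * Δ) ^ (k + 1) / α ^ (2 * k + 3)) by rw [← hscale]; ring]
  constructor
  · gcongr
  · calc _ = α ^ 2 * (lam * Δ) ^ (k + 1) /
            (α ^ 2 * (cfDenom (lam * Δ) (k + 1) * cfDenom (lam * Δ) (k + 2))) := by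
          field_simp
      _ ≤ α ^ 2 * (lam * Δ) ^ (k + 1) / α ^ (2 * k + 3) := by gcongr
      _ = _ := by ring

end Sequence

section Squeeze

theorem tendsto_div_of_bounded_sub_mul {ι : Type*} {l : Filter ι} {f L : ι → ℝ} {a C₁ C₂ : ℝ}
    (hL : Tendsto L l atTop) (hf : ∀ᶠ x in l, a * L x + C₁ ≤ f x ∧ f x ≤ a * L x + C₂) :
    Tendsto (fun x => f x / L x) l (𝓝 a) := by
  have hlim : ∀ C : ℝ, Tendsto (fun x => a + C / L x) l (𝓝 a) := fun C => by
    simpa using tendsto_const_nhds.add (tendsto_const_nhds.div_atTop hL)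
  have hbounds : ∀ᶠ x in l, a + C₁ / L x ≤ f x / L x ∧ f x / L x ≤ a + C₂ / L x := by
    filter_upwards [hf, hL.eventually_gt_atTop 0] with x ⟨hlo, hhi⟩ hx
    rw [add_div' _ _ _ hx.ne', add_div' _ _ _ hx.ne', div_le_div_iff_of_pos_right hx,
      div_le_div_iff_of_pos_right hx]
    constructor <;> linarith
  exact tendsto_of_tendsto_of_tendsto_of_le_of_le' (hlim C₁) (hlim C₂)
    (hbounds.mono fun _ => And.left) (hbounds.mono fun _ => And.right)

theorem finite_setOf_le_of_tendsto_zero {d : ℕ → ℝ} (hd : Tendsto d atTop (𝓝 0)) {ε : ℝ}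
    (hε : 0 < ε) : {h | ε ≤ d h}.Finite := by
  have : ∀ᶠ h in cofinite, d h < ε := Nat.cofinite_eq_atTop ▸ hd.eventually (gt_mem_nhds hε)
  simpa using Filter.eventually_cofinite.mp this

theorem le_mul_pow_iff_log_le {ε C ρ : ℝ} (hε : 0 < ε) (hC : 0 < C) (hρ : 0 < ρ) (n : ℕ) :
    ε ≤ C * ρ ^ n ↔ Real.log ε ≤ Real.log C + n * Real.log ρ := by
  rw [← Real.log_le_log_iff hε (by positivity), Real.log_mul hC.ne' (by positivity),
    Real.log_pow]

theorem tendsto_log_one_div_nhdsGT_zero :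
    Tendsto (fun ε : ℝ => Real.log (1 / ε)) (𝓝[>] 0) atTop :=
  (tendsto_neg_atBot_atTop.comp Real.tendsto_log_nhdsGT_zero).congr fun ε => by
    simp [Real.log_inv]

variable {d : ℕ → ℝ} {n₀ : ℕ} {ρ m M : ℝ}

theorem finite_setOf_le_of_le_mul_pow (hρ₀ : 0 < ρ) (hρ₁ : ρ < 1)
    (hd : ∀ h, n₀ ≤ h → d h ≤ M * ρ ^ h) {ε : ℝ} (hε : 0 < ε) :
    {h | n₀ ≤ h ∧ ε ≤ d h}.Finite := by
  have hlim : Tendsto (fun h : ℕ => M * ρ ^ h) atTop (𝓝 0) := by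
    simpa using (tendsto_pow_atTop_nhds_zero_of_lt_one hρ₀.le hρ₁).const_mul M
  exact (finite_setOf_le_of_tendsto_zero hlim hε).subset fun h hh => hh.2.trans (hd h hh.1)

theorem tendsto_sSup_div_log_of_geometric_bounds (hρ₀ : 0 < ρ) (hρ₁ : ρ < 1) (hm : 0 < m)
    (hd : ∀ h, n₀ ≤ h → m * ρ ^ h ≤ d h ∧ d h ≤ M * ρ ^ h) :
    Tendsto (fun ε => (sSup {h | n₀ ≤ h ∧ ε ≤ d h} : ℕ) / Real.log (1 / ε) : ℝ → ℝ) (𝓝[>] 0)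
      (𝓝 (-1 / Real.log ρ)) := by
  have hlogρ : Real.log ρ < 0 := Real.log_neg hρ₀ hρ₁
  have hM : 0 < M := pos_of_mul_pos_left ((mul_pos hm (pow_pos hρ₀ n₀)).trans_le
    ((hd n₀ le_rfl).1.trans (hd n₀ le_rfl).2)) (pow_pos hρ₀ n₀).le
  refine tendsto_div_of_bounded_sub_mul (C₁ := Real.log m / -Real.log ρ - 1)
    (C₂ := Real.log M / -Real.log ρ) tendsto_log_one_div_nhdsGT_zero ?_
  filter_upwards [Ioo_mem_nhdsGT (mul_pos hm (pow_pos hρ₀ n₀))] with ε ⟨hε, hεn₀⟩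
  set S := {h | n₀ ≤ h ∧ ε ≤ d h}
  have hbdd : BddAbove S :=
    (finite_setOf_le_of_le_mul_pow hρ₀ hρ₁ (fun h hh => (hd h hh).2) hε).bddAbove
  have hmem : sSup S ∈ S := Nat.sSup_mem ⟨n₀, le_rfl, hεn₀.le.trans (hd n₀ le_rfl).1⟩ hbdd
  have hnext : sSup S + 1 ∉ S := fun h => by simpa using le_csSup hbdd h
  have hupper : ε ≤ M * ρ ^ sSup S := hmem.2.trans (hd _ hmem.1).2
  have hlower : ¬ ε ≤ m * ρ ^ (sSup S + 1) := fun h =>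
    hnext ⟨hmem.1.trans (Nat.le_succ _), h.trans (hd _ (hmem.1.trans (Nat.le_succ _))).1⟩
  rw [le_mul_pow_iff_log_le hε hM hρ₀] at hupper
  rw [le_mul_pow_iff_log_le hε hm hρ₀] at hlower
  rw [one_div, Real.log_inv, show -1 / Real.log ρ = (-Real.log ρ)⁻¹ by ring]
  set a := -Real.log ρ
  have ha : 0 < a := neg_pos.mpr hlogρ
  rw [show Real.log ρ = -a by ring] at hupper hlower
  push_cast at hlower
  constructor
  · rw [show a⁻¹ * -Real.log ε + (Real.log m / a - 1) =
        (Real.log m - Real.log ε) / a - 1 by ring, sub_le_iff_le_add, div_le_iff₀ ha]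
    linarith
  · rw [show a⁻¹ * -Real.log ε + Real.log M / a = (Real.log M - Real.log ε) / a by ring,
      le_div_iff₀ ha]
    linarith

end Squeeze

section Roots

variable {lam : ℝ} {Δ : ℕ}

theorem alphaMD_sq (hc : 0 ≤ lam * Δ) : alphaMD lam Δ ^ 2 = alphaMD lam Δ + lam * Δ := by
  have hs := Real.sq_sqrt (show 0 ≤ 1 + 4 * lam * Δ by linarith)
  unfold alphaMD
  linear_combination hs / 4

theorem one_lt_alphaMD (hc : 0 < lam * Δ) : 1 < alphaMD lam Δ := by
  have : 1 < Real.sqrt (1 + 4 * lam * Δ) := Real.lt_sqrt_of_sq_lt (by linarith)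
  unfold alphaMD
  linarith

theorem abs_betaMD (hc : 0 < lam * Δ) : |betaMD lam Δ| = alphaMD lam Δ - 1 := by
  rw [show betaMD lam Δ = 1 - alphaMD lam Δ by unfold betaMD alphaMD; ring,
    abs_sub_comm, abs_of_pos (sub_pos.mpr (one_lt_alphaMD hc))]

theorem sqrt_mul_sqrt_add_half_le_alphaMD (hlam : 0 ≤ lam) :
    √lam * √Δ + 1 / 2 ≤ alphaMD lam Δ := by
  have : 2 * (√lam * √Δ) ≤ √(1 + 4 * lam * Δ) := Real.le_sqrt_of_sq_le (by
    rw [mul_pow, mul_pow, Real.sq_sqrt hlam, Real.sq_sqrt (Nat.cast_nonneg Δ)]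
    linarith)
  unfold alphaMD
  linarith

theorem alphaMD_le_sqrt_mul_sqrt_add_one (hlam : 0 ≤ lam) :
    alphaMD lam Δ ≤ √lam * √Δ + 1 := by
  have : √(1 + 4 * lam * Δ) ≤ 1 + 2 * (√lam * √Δ) := Real.sqrt_le_iff.mpr ⟨by positivity, by
    nlinarith [Real.sq_sqrt hlam, Real.sq_sqrt (Nat.cast_nonneg (α := ℝ) Δ),
      mul_nonneg (Real.sqrt_nonneg lam) (Real.sqrt_nonneg Δ)]⟩
  unfold alphaMD
  linarith

end Roots

theorem neg_inv_log_sub_one_div_self_mem_Icc {α : ℝ} (hα : 1 < α) :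
    -1 / Real.log ((α - 1) / α) ∈ Set.Icc (α - 1) α := by
  have hα₀ : 0 < α - 1 := sub_pos.mpr hα
  have hx : 0 < (α - 1) / α := by positivity
  have hlower : α⁻¹ ≤ -Real.log ((α - 1) / α) := by
    have h := Real.log_le_sub_one_of_pos hx
    rw [show (α - 1) / α - 1 = -α⁻¹ by field_simp; ring] at h
    linarith
  have hupper : -Real.log ((α - 1) / α) ≤ (α - 1)⁻¹ := by
    have h := Real.one_sub_inv_le_log_of_pos hx
    rw [inv_div, show 1 - α / (α - 1) = -(α - 1)⁻¹ by field_simp; ring] at h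
    linarith
  rw [show -1 / Real.log ((α - 1) / α) = (-Real.log ((α - 1) / α))⁻¹ by
    rw [inv_neg, ← one_div, neg_div]]
  have hpos : 0 < -Real.log ((α - 1) / α) := (inv_pos.mpr (by linarith)).trans_le hlower
  constructor
  · simpa using inv_anti₀ hpos hupper
  · simpa using inv_anti₀ (by positivity) hlower

theorem tendsto_inv_sqrt_mul_neg_inv_log_betaMD_div_alphaMD {lam : ℝ} (hlam : 0 < lam) :
    Tendsto (fun Δ : ℕ => (1 / √Δ) * (-1 / Real.log (|betaMD lam Δ| / alphaMD lam Δ))) atTop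
      (𝓝 (√lam)) := by
  have hsqrt : Tendsto (fun Δ : ℕ => √(Δ : ℝ)) atTop atTop :=
    Real.tendsto_sqrt_atTop.comp tendsto_natCast_atTop_atTop
  have hlim : ∀ C : ℝ, Tendsto (fun Δ : ℕ => √lam + C / √Δ) atTop (𝓝 (√lam)) := fun C => by
    simpa using tendsto_const_nhds.add (tendsto_const_nhds.div_atTop hsqrt)
  have hbounds : ∀ᶠ Δ : ℕ in atTop,
      √lam + -1 / √Δ ≤ (1 / √Δ) * (-1 / Real.log (|betaMD lam Δ| / alphaMD lam Δ)) ∧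
        (1 / √Δ) * (-1 / Real.log (|betaMD lam Δ| / alphaMD lam Δ)) ≤ √lam + 1 / √Δ := by
    filter_upwards [eventually_ge_atTop 1] with Δ hΔ
    have hc : 0 < lam * Δ := mul_pos hlam (by exact_mod_cast hΔ)
    have hr : 0 < √(Δ : ℝ) := Real.sqrt_pos.mpr (by exact_mod_cast hΔ)
    obtain ⟨h₁, h₂⟩ := neg_inv_log_sub_one_div_self_mem_Icc (one_lt_alphaMD hc)
    have h₃ := sqrt_mul_sqrt_add_half_le_alphaMD (Δ := Δ) hlam.le
    have h₄ := alphaMD_le_sqrt_mul_sqrt_add_one (Δ := Δ) hlam.le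
    rw [abs_betaMD hc, one_div_mul_eq_div, le_div_iff₀ hr, div_le_iff₀ hr, add_mul, add_mul,
      div_mul_cancel₀ _ hr.ne', div_mul_cancel₀ _ hr.ne']
    constructor <;> linarith
  exact tendsto_of_tendsto_of_tendsto_of_le_of_le' (hlim (-1)) (hlim 1)
    (hbounds.mono fun _ => And.left) (hbounds.mono fun _ => And.right)

theorem stmt14 (lam : ℝ) (hlam : 0 < lam) :
    (∀ Δ : ℕ, 1 ≤ Δ →
      (∃ ε₀ : ℝ, 0 < ε₀ ∧ ∀ ε : ℝ, 0 < ε → ε < ε₀ →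
        {h : ℕ | 2 ≤ h ∧ ε ≤ |yseq lam Δ h - yseq lam Δ (h - 1)|}.Finite) ∧
      Filter.Tendsto (fun ε : ℝ => (hlow lam Δ ε : ℝ) / Real.log (1 / ε))
        (nhdsWithin 0 (Set.Ioi 0))
        (nhds (-1 / Real.log (|betaMD lam Δ| / alphaMD lam Δ)))) ∧
    Filter.Tendsto
      (fun Δ : ℕ => (1 / Real.sqrt Δ) * (-1 / Real.log (|betaMD lam Δ| / alphaMD lam Δ)))
      Filter.atTop (nhds (Real.sqrt lam)) := by
  refine ⟨fun Δ hΔ => ?_, tendsto_inv_sqrt_mul_neg_inv_log_betaMD_div_alphaMD hlam⟩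
  have hc : 0 < lam * Δ := mul_pos hlam (by exact_mod_cast hΔ)
  have hα₁ := one_lt_alphaMD hc
  have hρ₀ : 0 < (alphaMD lam Δ - 1) / alphaMD lam Δ := div_pos (by linarith) (by linarith)
  have hρ₁ : (alphaMD lam Δ - 1) / alphaMD lam Δ < 1 :=
    (div_lt_one (by linarith)).mpr (by linarith)
  have hbounds := fun h (hh : 2 ≤ h) => abs_yseq_sub_bounds (alphaMD_sq hc.le) hα₁ hh
  rw [abs_betaMD hc]
  exact ⟨⟨1, one_pos, fun ε hε _ =>
      finite_setOf_le_of_le_mul_pow hρ₀ hρ₁ (fun h hh => (hbounds h hh).2) hε⟩,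
    tendsto_sSup_div_log_of_geometric_bounds hρ₀ hρ₁ (inv_pos.mpr (by linarith)) hbounds⟩
end
end
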